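/- Let Q₀ : ℝ^d → ℝ be a probability density (measurable, nonnegative, with ∫_{ℝ^d} Q₀ = 1), and let α ∈ ℝ, β > 0. Define Q(z) = ∫_{ℝ^d} φ_{α,β}(z, x) Q₀(x) dx. Then Q(z) > 0 for every z ∈ ℝ^d, and the score ∇ log Q satisfies the weighted-integral identity ∇ log Q(z) = ∫_{ℝ^d} −((z − αx)/β²) · w(z, x) · Q₀(x) dx, where the weight is w(z, x) = φ_{α,β}(z, x) / ∫_{ℝ^d} φ_{α,β}(z, x′) Q₀(x′) dx′. -/

import Mathlib

/-! The z-gradient of the kernel, `φ(z,x) • (-(z - αx)/β²)`, is bounded by `(2πβ²)^{-d/2}/β`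
uniformly in `z` and `x`, because `t e^{-t²/(2β²)} ≤ β`. Against the integrable `Q₀` this is a
dominating function, so `Q` may be differentiated under the integral sign, and the chain rule for
`log` divides the resulting gradient by `Q(z)`, which is positive since `φ > 0` and `Q₀` has
mass `1`. -/

open Real MeasureTheory

/-- The Gaussian kernel `φ_{α,β}(z,x) = (2πβ²)^{-d/2} exp(-‖z-αx‖²/(2β²))`. -/
noncomputable def gaussKernel (d : ℕ) (α β : ℝ)
    (z x : EuclideanSpace ℝ (Fin d)) : ℝ :=
  (2 * Real.pi * β ^ 2) ^ (-(d : ℝ) / 2) * Real.exp (-‖z - α • x‖ ^ 2 / (2 * β ^ 2))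

open InnerProductSpace

section Gradient

variable {E : Type*} [NormedAddCommGroup E] [InnerProductSpace ℝ E] [CompleteSpace E]
  {f : E → ℝ} {f' x : E}

theorem HasDerivAt.comp_hasGradientAt {g : ℝ → ℝ} {g' : ℝ} (hg : HasDerivAt g g' (f x))
    (hf : HasGradientAt f f' x) : HasGradientAt (g ∘ f) (g' • f') x := by
  rw [hasGradientAt_iff_hasFDerivAt, map_smul]
  exact hg.comp_hasFDerivAt x hf

theorem HasGradientAt.mul_const (hf : HasGradientAt f f' x) (c : ℝ) :
    HasGradientAt (fun y => f y * c) (c • f') x := by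
  rw [hasGradientAt_iff_hasFDerivAt, map_smul]
  exact hf.hasFDerivAt.mul_const c

theorem HasGradientAt.log (hf : HasGradientAt f f' x) (hx : f x ≠ 0) :
    HasGradientAt (fun y => Real.log (f y)) ((f x)⁻¹ • f') x := by
  rw [hasGradientAt_iff_hasFDerivAt, map_smul]
  exact hf.hasFDerivAt.log hx

theorem hasGradientAt_norm_sub_sq (c : E) :
    HasGradientAt (fun y => ‖y - c‖ ^ 2) (2 • (x - c)) x := by
  rw [hasGradientAt_iff_hasFDerivAt, map_nsmul]
  exact ((hasFDerivAt_id x).sub_const c).norm_sq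

theorem hasGradientAt_integral_of_dominated {X : Type*} [MeasurableSpace X] {μ : Measure X}
    {F : E → X → ℝ} {F' : E → X → E} {bound : X → ℝ}
    (hF_meas : ∀ y, AEStronglyMeasurable (F y) μ) (hF_int : Integrable (F x) μ)
    (hF'_meas : AEStronglyMeasurable (F' x) μ) (h_bound : ∀ᵐ a ∂μ, ∀ y, ‖F' y a‖ ≤ bound a)
    (bound_integrable : Integrable bound μ)
    (h_diff : ∀ᵐ a ∂μ, ∀ y, HasGradientAt (F · a) (F' y a) y) :
    HasGradientAt (fun y => ∫ a, F y a ∂μ) (∫ a, F' x a ∂μ) x := by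
  have hcomm : toDual ℝ E (∫ a, F' x a ∂μ) = ∫ a, toDual ℝ E (F' x a) ∂μ :=
    ((toDual ℝ E).toLinearIsometry.integral_comp_comm _).symm
  rw [hasGradientAt_iff_hasFDerivAt, hcomm]
  refine hasFDerivAt_integral_of_dominated_of_fderiv_le (F' := fun y a => toDual ℝ E (F' y a))
    Filter.univ_mem (Filter.Eventually.of_forall hF_meas) hF_int
    ((toDual ℝ E).continuous.comp_aestronglyMeasurable hF'_meas) ?_ bound_integrable ?_
  · filter_upwards [h_bound] with a ha y _
    simpa using ha y
  · filter_upwards [h_diff] with a ha y _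
    exact ha y

end Gradient

theorem mul_exp_neg_sq_div_le {β : ℝ} (hβ : 0 < β) (t : ℝ) :
    t * exp (-t ^ 2 / (2 * β ^ 2)) ≤ β := by
  rw [neg_div, exp_neg, ← div_eq_mul_inv, div_le_iff₀ (exp_pos _)]
  have hgap : β * (t ^ 2 / (2 * β ^ 2) + 1) - t = ((t - β) ^ 2 + β ^ 2) / (2 * β) := by
    field_simp; ring
  have hgap_nonneg : 0 ≤ ((t - β) ^ 2 + β ^ 2) / (2 * β) := by positivity
  nlinarith [add_one_le_exp (t ^ 2 / (2 * β ^ 2))]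

theorem integral_mul_pos_of_pos_of_integral_pos {X : Type*} [MeasurableSpace X] {μ : Measure X}
    {f g : X → ℝ} (hf : ∀ x, 0 < f x) (hg : 0 ≤ g) (hfg : Integrable (fun x => f x * g x) μ)
    (hg_pos : 0 < ∫ x, g x ∂μ) : 0 < ∫ x, f x * g x ∂μ := by
  have hsupp : Function.support (fun x => f x * g x) = Function.support g := by
    ext x
    simp [(hf x).ne']
  rw [integral_pos_iff_support_of_nonneg (fun x => mul_nonneg (hf x).le (hg x)) hfg, hsupp,
    ← integral_pos_iff_support_of_nonneg hg (Integrable.of_integral_ne_zero hg_pos.ne')]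
  exact hg_pos

section GaussKernel

variable {d : ℕ} {α β : ℝ}

theorem gaussKernel_nonneg (z x : EuclideanSpace ℝ (Fin d)) : 0 ≤ gaussKernel d α β z x :=
  mul_nonneg (rpow_nonneg (by positivity) _) (exp_pos _).le

theorem gaussKernel_pos (hβ : β ≠ 0) (z x : EuclideanSpace ℝ (Fin d)) :
    0 < gaussKernel d α β z x :=
  mul_pos (rpow_pos_of_pos (by positivity) _) (exp_pos _)

theorem gaussKernel_le (z x : EuclideanSpace ℝ (Fin d)) :
    gaussKernel d α β z x ≤ (2 * π * β ^ 2) ^ (-(d : ℝ) / 2) :=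
  mul_le_of_le_one_right (rpow_nonneg (by positivity) _)
    (exp_le_one_iff.2 (div_nonpos_of_nonpos_of_nonneg (by simp) (by positivity)))

theorem continuous_gaussKernel (z : EuclideanSpace ℝ (Fin d)) :
    Continuous (gaussKernel d α β z) := by
  unfold gaussKernel
  fun_prop

theorem hasGradientAt_gaussKernel (z x : EuclideanSpace ℝ (Fin d)) :
    HasGradientAt (gaussKernel d α β · x)
      (gaussKernel d α β z x • (-(1 / β ^ 2)) • (z - α • x)) z := by
  have hprofile : HasDerivAt (fun t => (2 * π * β ^ 2) ^ (-(d : ℝ) / 2) * exp (-t / (2 * β ^ 2)))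
      ((2 * π * β ^ 2) ^ (-(d : ℝ) / 2) * exp (-‖z - α • x‖ ^ 2 / (2 * β ^ 2)) *
        (-1 / (2 * β ^ 2))) (‖z - α • x‖ ^ 2) :=
    ((((hasDerivAt_neg _).div_const (2 * β ^ 2)).exp).const_mul _).congr_deriv (by ring)
  convert hprofile.comp_hasGradientAt (f := fun y => ‖y - α • x‖ ^ 2)
    (hasGradientAt_norm_sub_sq (α • x)) using 1
  · rfl
  rw [gaussKernel]
  module

theorem norm_gaussKernel_smul_le (hβ : 0 < β) (z x : EuclideanSpace ℝ (Fin d)) :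
    ‖gaussKernel d α β z x • (-(1 / β ^ 2)) • (z - α • x)‖ ≤
      (2 * π * β ^ 2) ^ (-(d : ℝ) / 2) / β := by
  have hC : 0 ≤ (2 * π * β ^ 2) ^ (-(d : ℝ) / 2) := rpow_nonneg (by positivity) _
  rw [norm_smul, norm_smul, norm_neg, Real.norm_of_nonneg (gaussKernel_nonneg z x),
    Real.norm_of_nonneg (by positivity), gaussKernel]
  calc _ = (2 * π * β ^ 2) ^ (-(d : ℝ) / 2) / β ^ 2 *
        (‖z - α • x‖ * exp (-‖z - α • x‖ ^ 2 / (2 * β ^ 2))) := by ring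
    _ ≤ (2 * π * β ^ 2) ^ (-(d : ℝ) / 2) / β ^ 2 * β := by
        gcongr
        exact mul_exp_neg_sq_div_le hβ _
    _ = _ := by field_simp

variable {μ : Measure (EuclideanSpace ℝ (Fin d))} {Q₀ : EuclideanSpace ℝ (Fin d) → ℝ}

theorem integrable_gaussKernel_mul (hQ₀ : Integrable Q₀ μ) (z : EuclideanSpace ℝ (Fin d)) :
    Integrable (fun x => gaussKernel d α β z x * Q₀ x) μ :=
  hQ₀.bdd_mul (continuous_gaussKernel z).aestronglyMeasurable
    (c := (2 * π * β ^ 2) ^ (-(d : ℝ) / 2)) (Filter.Eventually.of_forall fun x => by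
      rw [Real.norm_of_nonneg (gaussKernel_nonneg z x)]
      exact gaussKernel_le z x)

theorem hasGradientAt_integral_gaussKernel_mul (hβ : 0 < β) (hQ₀ : Integrable Q₀ μ)
    (z : EuclideanSpace ℝ (Fin d)) :
    HasGradientAt (fun z => ∫ x, gaussKernel d α β z x * Q₀ x ∂μ)
      (∫ x, Q₀ x • gaussKernel d α β z x • (-(1 / β ^ 2)) • (z - α • x) ∂μ) z := by
  refine hasGradientAt_integral_of_dominated (F := fun y x => gaussKernel d α β y x * Q₀ x)
    (F' := fun y x => Q₀ x • gaussKernel d α β y x • (-(1 / β ^ 2)) • (y - α • x))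
    (bound := fun x => ‖Q₀ x‖ * ((2 * π * β ^ 2) ^ (-(d : ℝ) / 2) / β))
    (fun y => (integrable_gaussKernel_mul hQ₀ y).aestronglyMeasurable)
    (integrable_gaussKernel_mul hQ₀ z) ?_ ?_ (hQ₀.norm.mul_const _) ?_
  · exact hQ₀.aestronglyMeasurable.smul
      (((continuous_gaussKernel z).smul (by fun_prop)).aestronglyMeasurable)
  · refine Filter.Eventually.of_forall fun x y => ?_
    rw [norm_smul]
    exact mul_le_mul_of_nonneg_left (norm_gaussKernel_smul_le hβ y x) (norm_nonneg _)
  · exact Filter.Eventually.of_forall fun x y => (hasGradientAt_gaussKernel y x).mul_const (Q₀ x)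

end GaussKernel

theorem score_of_gaussian_smoothed_density_general (d : ℕ) (α β : ℝ) (hβ : 0 < β)
    (Q₀ : EuclideanSpace ℝ (Fin d) → ℝ)
    (hnn : ∀ x, 0 ≤ Q₀ x)
    (hprob : ∫ x, Q₀ x = 1) :
    ∀ z : EuclideanSpace ℝ (Fin d),
      (0 < ∫ x, gaussKernel d α β z x * Q₀ x) ∧
      HasGradientAt (fun z' => Real.log (∫ x, gaussKernel d α β z' x * Q₀ x))
        (∫ x, ((gaussKernel d α β z x / ∫ x', gaussKernel d α β z x' * Q₀ x') * Q₀ x) •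
          ((-(1 / β ^ 2)) • (z - α • x))) z := by
  intro z
  have hQ₀ : Integrable Q₀ := .of_integral_ne_zero (by simp [hprob])
  have hpos : 0 < ∫ x, gaussKernel d α β z x * Q₀ x :=
    integral_mul_pos_of_pos_of_integral_pos (gaussKernel_pos hβ.ne' z) hnn
      (integrable_gaussKernel_mul hQ₀ z) (by simp [hprob])
  refine ⟨hpos, ?_⟩
  convert (hasGradientAt_integral_gaussKernel_mul hβ hQ₀ z).log hpos.ne' using 1
  rw [← integral_smul]
  congr 1
  funext x
  simp only [smul_smul]
  congr 1
  ring

/-- The analytic score representation (Eq. (7)): if `Q₀` is a probability density and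
`Q(z) = ∫ φ_{α,β}(z,x) Q₀(x) dx`, then `Q > 0` everywhere and
`∇ log Q(z) = ∫ −((z − αx)/β²) · w(z,x) · Q₀(x) dx` with weights
`w(z,x) = φ_{α,β}(z,x) / ∫ φ_{α,β}(z,x′) Q₀(x′) dx′`. -/
theorem score_of_gaussian_smoothed_density (d : ℕ) (α β : ℝ) (hβ : 0 < β)
    (Q₀ : EuclideanSpace ℝ (Fin d) → ℝ)
    (hmeas : Measurable Q₀) (hnn : ∀ x, 0 ≤ Q₀ x)
    (hprob : ∫ x, Q₀ x = 1) :
    ∀ z : EuclideanSpace ℝ (Fin d),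
      (0 < ∫ x, gaussKernel d α β z x * Q₀ x) ∧
      HasGradientAt (fun z' => Real.log (∫ x, gaussKernel d α β z' x * Q₀ x))
        (∫ x, ((gaussKernel d α β z x / ∫ x', gaussKernel d α β z x' * Q₀ x') * Q₀ x) •
          ((-(1 / β ^ 2)) • (z - α • x))) z :=
  score_of_gaussian_smoothed_density_general d α β hβ Q₀ hnn hprob
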